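/- For the uniform random Boolean cellular automaton (rule distribution uniform over all 16 Boolean rules), the probability σ_* that a cell of the infinite automaton on ℤ stabilizes satisfies σ_* ≥ 1/8; in particular σ_* > 0. Likewise σ_N ≥ 1/8 for every N ≥ 3. -/

import Mathlib

open MeasureTheory ProbabilityTheory Filter

/-- A Boolean rule: a function `{0,1} × {0,1} → {0,1}`. -/
abbrev Rule : Type := Bool → Bool → Bool

/-- The constant-0 rule. -/
def phi0 : Rule := fun _ _ => false
/-- The constant-1 rule. -/
def phi15 : Rule := fun _ _ => true

/-- The Bernoulli(1/2) distribution on `Bool`. -/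
noncomputable def berHalf : Measure Bool :=
  (2 : ENNReal)⁻¹ • (Measure.dirac true + Measure.dirac false)

/-- Evolution of an inhomogeneous cellular automaton on ℤ:
`x_i(t+1) = φ_i(x_{i-1}(t), x_{i+1}(t))`. -/
def evolveZ (φ : ℤ → Rule) (x0 : ℤ → Bool) : ℕ → ℤ → Bool
  | 0 => x0
  | t+1 => fun i => φ i (evolveZ φ x0 t (i-1)) (evolveZ φ x0 t (i+1))

/-- Evolution of an inhomogeneous cellular automaton on the circle ℤ/Nℤ. -/
def evolveC (N : ℕ) (φ : ZMod N → Rule) (x0 : ZMod N → Bool) : ℕ → ZMod N → Bool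
  | 0 => x0
  | t+1 => fun i => φ i (evolveC N φ x0 t (i-1)) (evolveC N φ x0 t (i+1))

/-- A trajectory `t ↦ x(t)` stabilizes if it is eventually constant. -/
def Stabilizes (x : ℕ → Bool) : Prop := ∃ T, ∀ t, T ≤ t → x t = x T

/-- Trajectory of cell `i` in the infinite RBCA realization where cell `j` has rule
`(W j ω).1` and initial value `(W j ω).2`. -/
def traj (W : ℤ → Ω → Rule × Bool) (ω : Ω) (i : ℤ) : ℕ → Bool :=
  fun t => evolveZ (fun j => (W j ω).1) (fun j => (W j ω).2) t i

/-- Trajectory of cell `i` in the size-`N` RBCA realization where cell `j` has rule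
`(W j ω).1` and initial value `(W j ω).2`. -/
def trajC (N : ℕ) (W : ZMod N → Ω → Rule × Bool) (ω : Ω) (i : ZMod N) : ℕ → Bool :=
  fun t => evolveC N (fun j => (W j ω).1) (fun j => (W j ω).2) t i


lemma constRule_ne : phi0 ≠ phi15 := by
  intro h
  have := congrFun (congrFun h true) true
  simp [phi0, phi15] at this

lemma key_measure (mu : Measure Rule) [IsProbabilityMeasure mu]
    (hunif : ∀ r : Rule, mu {r} = 1/16)
    {Ω : Type*} [MeasurableSpace Ω] (P : Measure Ω)
    (W : Ω → Rule × Bool) (hmeas : Measurable W)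
    (hlaw : Measure.map W P = mu.prod berHalf) :
    (1/8 : ENNReal) ≤ P {ω | (W ω).1 = phi0 ∨ (W ω).1 = phi15} := by
  have hberp : berHalf Set.univ = 1 := by
    simp [berHalf]
    exact ENNReal.inv_two_add_inv_two
  have hsf : SFinite berHalf := by
    have : IsFiniteMeasure berHalf := ⟨by rw [hberp]; exact ENNReal.one_lt_top⟩
    infer_instance
  have hS : MeasurableSet (({phi0, phi15} : Set Rule) ×ˢ (Set.univ : Set Bool)) := by
    exact (MeasurableSet.insert (measurableSet_singleton _) _).prod MeasurableSet.univ
  have hpre : {ω | (W ω).1 = phi0 ∨ (W ω).1 = phi15}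
      = W ⁻¹' (({phi0, phi15} : Set Rule) ×ˢ (Set.univ : Set Bool)) := by
    ext ω
    simp [Set.mem_prod, Set.mem_insert_iff]
  rw [hpre, ← Measure.map_apply hmeas hS, hlaw, Measure.prod_prod, hberp, mul_one]
  have : mu ({phi0, phi15} : Set Rule) = mu {phi0} + mu {phi15} := by
    rw [Set.insert_eq]
    exact measure_union (by simp [Set.disjoint_singleton, constRule_ne])
      (measurableSet_singleton _)
  rw [this, hunif, hunif]
  have : (1:ENNReal)/16 + 1/16 = 1/8 := by
    rw [ENNReal.div_add_div_same]
    rw [ENNReal.div_eq_div_iff] <;> norm_num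
  rw [this]

lemma stab_of_const_Z {Ω : Type*} (W : ℤ → Ω → Rule × Bool) (ω : Ω)
    (h : (W 0 ω).1 = phi0 ∨ (W 0 ω).1 = phi15) :
    Stabilizes (traj W ω 0) := by
  refine ⟨1, fun t ht => ?_⟩
  obtain ⟨s, rfl⟩ := Nat.exists_eq_add_of_le ht
  rcases h with h | h <;>
  · show evolveZ _ _ (1 + s) 0 = evolveZ _ _ 1 0
    cases s with
    | zero => rfl
    | succ n => simp [evolveZ, h, phi0, phi15, Nat.add_succ]

lemma stab_of_const_C {Ω : Type*} (N : ℕ) (W : ZMod N → Ω → Rule × Bool) (ω : Ω)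
    (h : (W 0 ω).1 = phi0 ∨ (W 0 ω).1 = phi15) :
    Stabilizes (trajC N W ω 0) := by
  refine ⟨1, fun t ht => ?_⟩
  obtain ⟨s, rfl⟩ := Nat.exists_eq_add_of_le ht
  rcases h with h | h <;>
  · show evolveC _ _ _ (1 + s) 0 = evolveC _ _ _ 1 0
    cases s with
    | zero => rfl
    | succ n => simp [evolveC, h, phi0, phi15, Nat.add_succ]

/-- for the uniform RBCA (rule distribution uniform over the 16 Boolean
rules, i.i.d. Bernoulli(1/2) initial states), `σ_* ≥ 1/8` (so `σ_* > 0`), and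
`σ_N ≥ 1/8` for every `N ≥ 3`. -/
theorem stmt5 (mu : Measure Rule) [IsProbabilityMeasure mu]
    (hunif : ∀ r : Rule, mu {r} = 1/16)
    -- the infinite uniform RBCA on ℤ
    {Ωinf : Type*} [MeasurableSpace Ωinf] (Pinf : Measure Ωinf) [IsProbabilityMeasure Pinf]
    (Winf : ℤ → Ωinf → Rule × Bool) (hmeasinf : ∀ i, Measurable (Winf i))
    (hindepinf : iIndepFun Winf Pinf)
    (hlawinf : ∀ i, Measure.map (Winf i) Pinf = mu.prod berHalf)
    -- the uniform RBCA's on the circles ℤ/Nℤ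
    {Ωfin : ℕ → Type*} [∀ N, MeasurableSpace (Ωfin N)]
    (Pfin : ∀ N, Measure (Ωfin N)) [∀ N, IsProbabilityMeasure (Pfin N)]
    (Wfin : ∀ N, ZMod N → Ωfin N → Rule × Bool)
    (hmeasfin : ∀ N i, Measurable (Wfin N i))
    (hindepfin : ∀ N, iIndepFun (Wfin N) (Pfin N))
    (hlawfin : ∀ N i, Measure.map (Wfin N i) (Pfin N) = mu.prod berHalf) :
    (1/8 : ENNReal) ≤ Pinf {ω | Stabilizes (traj Winf ω 0)} ∧
    0 < Pinf {ω | Stabilizes (traj Winf ω 0)} ∧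
    ∀ N : ℕ, 3 ≤ N →
      (1/8 : ENNReal) ≤ Pfin N {ω | Stabilizes (trajC N (Wfin N) ω 0)} := by
  refine ⟨?_, ?_, ?_⟩
  · calc (1/8 : ENNReal) ≤ Pinf {ω | (Winf 0 ω).1 = phi0 ∨ (Winf 0 ω).1 = phi15} :=
          key_measure mu hunif Pinf (Winf 0) (hmeasinf 0) (hlawinf 0)
      _ ≤ _ := measure_mono fun ω h => stab_of_const_Z Winf ω h
  · refine lt_of_lt_of_le ?_
      (le_trans (key_measure mu hunif Pinf (Winf 0) (hmeasinf 0) (hlawinf 0))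
        (measure_mono fun ω h => stab_of_const_Z Winf ω h))
    norm_num
  · intro N _
    calc (1/8 : ENNReal) ≤ Pfin N {ω | (Wfin N 0 ω).1 = phi0 ∨ (Wfin N 0 ω).1 = phi15} :=
          key_measure mu hunif (Pfin N) (Wfin N 0) (hmeasfin N 0) (hlawfin N 0)
      _ ≤ _ := measure_mono fun ω h => stab_of_const_C N (Wfin N) ω h
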